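/- arXiv:2311.18274 — 4 statements merged into one kernel-verified Lean document; each statement's English description precedes it below -/
import Mathlib

section
/- Let μ be a probability measure on a measurable space (X, Σ_X), let v : X → [0, C_v] be measurable, let π : X → (0,1) be measurable with 1/π(x) ≤ C₁ for all x (C_v, C₁ finite constants), and let f : X → ℝ be measurable. Let (Ω, F, P) be a probability space, (k_t)_{t≥1} real numbers with k_t ∈ [2, ∞), and for each t let f̂_t : Ω×X → ℝ and π_t : Ω×X → [1/k_t, 1 − 1/k_t] be jointly measurable. Define the random L² errors N_t(ω) := (∫ (f̂_t(ω,x) − f(x))² dμ)^{1/2} and Q_t(ω) := (∫ (π_t(ω,x) − π(x))² dμ)^{1/2}, and suppose k_t·N_t → 0 in probability and k_t·Q_t → 0 in probability as t → ∞. Then the random variables G_t(ω) := ∫ [ (v(x) + (f(x) − f̂_t(ω,x))²)/π_t(ω,x) − v(x)/π(x) ] dμ(x) converge to 0 in probability as t → ∞. -/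
open MeasureTheory ProbabilityTheory Filter Topology

/-!
Write the integrand as `(v/π_t - v/π) + (f - f̂_t)²/π_t`. Since `1/k_t ≤ π_t ≤ 1` and `1/π ≤ C₁`,
the first part is at most `C_v C₁ k_t |π_t - π|` and the second at most `k_t (f - f̂_t)²`;
with `∫ |h| ≤ (∫ h²)^{1/2}` on a probability space this gives the deterministic bound
`|G_t| ≤ C_v C₁ (k_t Q_t) + (k_t N_t)²`, whose right-hand side tends to `0` in measure by
hypothesis.
-/

namespace MeasureTheory

variable {α ι E F : Type*} [MeasurableSpace α] {μ : Measure α} {l : Filter ι}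

theorem TendstoInMeasure.add [SeminormedAddCommGroup E] {f₁ f₂ : ι → α → E} {g₁ g₂ : α → E}
    (h₁ : TendstoInMeasure μ f₁ l g₁) (h₂ : TendstoInMeasure μ f₂ l g₂) :
    TendstoInMeasure μ (fun i a => f₁ i a + f₂ i a) l (fun a => g₁ a + g₂ a) := by
  rw [tendstoInMeasure_iff_norm] at h₁ h₂ ⊢
  intro ε hε
  have hsum := (h₁ (ε / 2) (half_pos hε)).add (h₂ (ε / 2) (half_pos hε))
  rw [add_zero] at hsum
  refine tendsto_of_tendsto_of_tendsto_of_le_of_le tendsto_const_nhds hsum (fun _ => zero_le)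
    (fun i => (measure_mono fun a ha => ?_).trans (measure_union_le _ _))
  by_contra hc
  simp only [Set.mem_union, Set.mem_ofPred_eq, not_or, not_le] at ha hc
  have := norm_add_le (f₁ i a - g₁ a) (f₂ i a - g₂ a)
  rw [add_sub_add_comm] at ha
  linarith

theorem TendstoInMeasure.comp_continuousAt [PseudoMetricSpace E] [PseudoMetricSpace F]
    {f : ι → α → E} {c : E} {φ : E → F} (hf : TendstoInMeasure μ f l (fun _ => c))
    (hφ : ContinuousAt φ c) :
    TendstoInMeasure μ (fun i a => φ (f i a)) l (fun _ => φ c) := by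
  rw [tendstoInMeasure_iff_dist] at hf ⊢
  intro ε hε
  obtain ⟨δ, hδ, hφδ⟩ := Metric.continuousAt_iff.mp hφ ε hε
  refine tendsto_of_tendsto_of_tendsto_of_le_of_le tendsto_const_nhds (hf δ hδ)
    (fun _ => zero_le) (fun i => measure_mono fun a ha => ?_)
  by_contra hc
  exact (not_le.mpr (hφδ (not_le.mp hc))) ha

theorem TendstoInMeasure.of_norm_le [SeminormedAddCommGroup E] [SeminormedAddCommGroup F]
    {f : ι → α → E} {g : ι → α → F} (hf : TendstoInMeasure μ f l (fun _ => 0))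
    (hgf : ∀ i a, ‖g i a‖ ≤ ‖f i a‖) : TendstoInMeasure μ g l (fun _ => 0) := by
  rw [tendstoInMeasure_iff_norm] at hf ⊢
  intro ε hε
  refine tendsto_of_tendsto_of_tendsto_of_le_of_le tendsto_const_nhds (hf ε hε)
    (fun _ => zero_le) (fun i => measure_mono fun a ha => ?_)
  simp only [Set.mem_ofPred_eq, sub_zero] at ha ⊢
  exact ha.trans (hgf i a)

end MeasureTheory

theorem integral_abs_le_sqrt_integral_sq {α : Type*} [MeasurableSpace α] {μ : Measure α}
    [IsProbabilityMeasure μ] {h : α → ℝ} (hh : MemLp h 2 μ) :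
    ∫ a, |h a| ∂μ ≤ Real.sqrt (∫ a, h a ^ 2 ∂μ) := by
  refine Real.le_sqrt_of_sq_le ?_
  have hvar := variance_nonneg (fun a => ‖h a‖) μ
  rw [variance_eq_sub hh.norm] at hvar
  simpa [Pi.pow_apply, Real.norm_eq_abs, sq_abs] using hvar

theorem abs_div_sub_div_le {v π p Cv C₁ k : ℝ} (hv : v ∈ Set.Icc 0 Cv) (hπ : 0 < π)
    (hπC : 1 / π ≤ C₁) (hk : 0 < k) (hp : 1 / k ≤ p) :
    |v / p - v / π| ≤ Cv * C₁ * k * |p - π| := by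
  have hp0 : 0 < p := (one_div_pos.mpr hk).trans_le hp
  have hpk : 1 / p ≤ k := by rwa [one_div_le hp0 hk]
  have hCv : 0 ≤ Cv := hv.1.trans hv.2
  have hsplit : v / p - v / π = v * (π - p) * (1 / p) * (1 / π) := by field_simp
  calc |v / p - v / π| = v * |p - π| * (1 / p) * (1 / π) := by
        rw [hsplit, abs_mul, abs_mul, abs_mul, abs_of_nonneg hv.1, abs_sub_comm,
          abs_of_pos (one_div_pos.mpr hp0), abs_of_pos (one_div_pos.mpr hπ)]
    _ ≤ Cv * |p - π| * k * C₁ := by gcongr; exact hv.2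
    _ = Cv * C₁ * k * |p - π| := by ring

section VarianceGap

variable {X : Type*} [MeasurableSpace X] {μ : Measure X} [IsProbabilityMeasure μ]
  {v π p : X → ℝ} {Cv C₁ k : ℝ}

theorem integrable_div_sub_div_and_abs_integral_le (hvm : Measurable v)
    (hv : ∀ x, v x ∈ Set.Icc 0 Cv) (hπm : Measurable π) (hπ : ∀ x, π x ∈ Set.Ioo 0 1)
    (hπC : ∀ x, 1 / π x ≤ C₁) (hk : 0 < k) (hpm : Measurable p) (hp : ∀ x, p x ∈ Set.Icc (1 / k) 1) :
    Integrable (fun x => v x / p x - v x / π x) μ ∧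
      |∫ x, (v x / p x - v x / π x) ∂μ| ≤
        Cv * C₁ * (k * Real.sqrt (∫ x, (p x - π x) ^ 2 ∂μ)) := by
  obtain ⟨x₀⟩ := nonempty_of_isProbabilityMeasure μ
  have hc : 0 ≤ Cv * C₁ * k := by
    have := (hv x₀).1.trans (hv x₀).2
    have := (one_div_pos.mpr (hπ x₀).1).trans_le (hπC x₀)
    positivity
  have hpπ : MemLp (fun x => p x - π x) 2 μ := by
    refine MemLp.of_bound (hpm.sub hπm).aestronglyMeasurable 1 (ae_of_all _ fun x => ?_)
    have := (one_div_pos.mpr hk).trans_le (hp x).1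
    rw [Real.norm_eq_abs, abs_le]
    constructor <;> linarith [(hp x).2, (hπ x).1, (hπ x).2]
  have hbound := fun x => abs_div_sub_div_le (hv x) (hπ x).1 (hπC x) hk (hp x).1
  have hint : Integrable (fun x => v x / p x - v x / π x) μ :=
    ((hpπ.integrable one_le_two).abs.const_mul _).mono'
      ((hvm.div hpm).sub (hvm.div hπm)).aestronglyMeasurable (ae_of_all _ hbound)
  refine ⟨hint, ?_⟩
  calc |∫ x, (v x / p x - v x / π x) ∂μ| ≤ ∫ x, |v x / p x - v x / π x| ∂μ :=
        abs_integral_le_integral_abs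
    _ ≤ ∫ x, Cv * C₁ * k * |p x - π x| ∂μ :=
        integral_mono hint.abs ((hpπ.integrable one_le_two).abs.const_mul _) hbound
    _ = Cv * C₁ * k * ∫ x, |p x - π x| ∂μ := integral_const_mul _ _
    _ ≤ Cv * C₁ * k * Real.sqrt (∫ x, (p x - π x) ^ 2 ∂μ) :=
        mul_le_mul_of_nonneg_left (integral_abs_le_sqrt_integral_sq hpπ) hc
    _ = Cv * C₁ * (k * Real.sqrt (∫ x, (p x - π x) ^ 2 ∂μ)) := by ring

theorem abs_integral_variance_gap_le (hvm : Measurable v) (hv : ∀ x, v x ∈ Set.Icc 0 Cv)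
    (hπm : Measurable π) (hπ : ∀ x, π x ∈ Set.Ioo 0 1) (hπC : ∀ x, 1 / π x ≤ C₁)
    (hk : 1 ≤ k) (hpm : Measurable p) (hp : ∀ x, p x ∈ Set.Icc (1 / k) 1) (f g : X → ℝ) :
    |∫ x, ((v x + (f x - g x) ^ 2) / p x - v x / π x) ∂μ| ≤
      Cv * C₁ * (k * Real.sqrt (∫ x, (p x - π x) ^ 2 ∂μ)) +
        (k * Real.sqrt (∫ x, (g x - f x) ^ 2 ∂μ)) ^ 2 := by
  have hk0 : 0 < k := zero_lt_one.trans_le hk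
  have hp0 : ∀ x, 0 < p x := fun x => (one_div_pos.mpr hk0).trans_le (hp x).1
  obtain ⟨hD, hDle⟩ :=
    integrable_div_sub_div_and_abs_integral_le (μ := μ) hvm hv hπm hπ hπC hk0 hpm hp
  by_cases hG : Integrable (fun x => (v x + (f x - g x) ^ 2) / p x - v x / π x) μ
  swap
  · rw [integral_undef hG, abs_zero]
    linarith [abs_nonneg (∫ x, (v x / p x - v x / π x) ∂μ), sq_nonneg
      (k * Real.sqrt (∫ x, (g x - f x) ^ 2 ∂μ))]
  have hE : Integrable (fun x => (g x - f x) ^ 2 / p x) μ :=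
    (hG.sub hD).congr (ae_of_all _ fun x => by simp only [Pi.sub_apply]; ring)
  have hS : Integrable (fun x => (g x - f x) ^ 2) μ := by
    refine (hE.bdd_mul (c := 1) hpm.aestronglyMeasurable (ae_of_all _ fun x => ?_)).congr
      (ae_of_all _ fun x => mul_div_cancel₀ _ (hp0 x).ne')
    rw [Real.norm_eq_abs, abs_of_pos (hp0 x)]
    exact (hp x).2
  have hEle : ∫ x, (g x - f x) ^ 2 / p x ∂μ ≤ k * ∫ x, (g x - f x) ^ 2 ∂μ := by
    rw [← integral_const_mul]
    refine integral_mono hE (hS.const_mul k) fun x => ?_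
    rw [div_le_iff₀ (hp0 x)]
    have : 1 ≤ k * p x := by have := (hp x).1; rwa [div_le_iff₀ hk0, mul_comm] at this
    nlinarith [sq_nonneg (g x - f x)]
  have hSle : k * ∫ x, (g x - f x) ^ 2 ∂μ ≤ (k * Real.sqrt (∫ x, (g x - f x) ^ 2 ∂μ)) ^ 2 := by
    have hI : 0 ≤ ∫ x, (g x - f x) ^ 2 ∂μ := integral_nonneg fun x => sq_nonneg _
    rw [mul_pow, Real.sq_sqrt hI]
    exact mul_le_mul_of_nonneg_right (by nlinarith) hI
  have hE0 : 0 ≤ ∫ x, (g x - f x) ^ 2 / p x ∂μ :=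
    integral_nonneg fun x => div_nonneg (sq_nonneg _) (hp0 x).le
  calc |∫ x, ((v x + (f x - g x) ^ 2) / p x - v x / π x) ∂μ|
      = |∫ x, (v x / p x - v x / π x) ∂μ + ∫ x, (g x - f x) ^ 2 / p x ∂μ| := by
        rw [← integral_add hD hE]; congr 2; ext x; ring
    _ ≤ |∫ x, (v x / p x - v x / π x) ∂μ| + ∫ x, (g x - f x) ^ 2 / p x ∂μ :=
        (abs_add_le _ _).trans_eq (by rw [abs_of_nonneg hE0])
    _ ≤ _ := by linarith

end VarianceGap

theorem a2ipw_variance_first_term_converges_general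
    {X : Type*} [mX : MeasurableSpace X] (μX : Measure X) [IsProbabilityMeasure μX]
    (v π f : X → ℝ) (Cv C₁ : ℝ)
    (hv : Measurable v) (hvbd : ∀ x, v x ∈ Set.Icc 0 Cv)
    (hπ : Measurable π) (hπ01 : ∀ x, π x ∈ Set.Ioo (0 : ℝ) 1)
    (hπbd : ∀ x, 1 / π x ≤ C₁)
    {Ω : Type*} [MeasurableSpace Ω] (μ : Measure Ω) [IsProbabilityMeasure μ]
    (k : ℕ → ℝ) (hk : ∀ t, 2 ≤ k t)
    (fhat : ℕ → Ω → X → ℝ) (πt : ℕ → Ω → X → ℝ)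
    (hπtmeas : ∀ t, Measurable (fun p : Ω × X => πt t p.1 p.2))
    (hπtbd : ∀ t ω x, πt t ω x ∈ Set.Icc (1 / k t) (1 - 1 / k t))
    (hNconv : TendstoInMeasure μ
      (fun t ω => k t * Real.sqrt (∫ x, (fhat t ω x - f x) ^ 2 ∂μX))
      atTop (fun _ => (0 : ℝ)))
    (hQconv : TendstoInMeasure μ
      (fun t ω => k t * Real.sqrt (∫ x, (πt t ω x - π x) ^ 2 ∂μX))
      atTop (fun _ => (0 : ℝ))) :
    TendstoInMeasure μ
      (fun t ω => ∫ x, ((v x + (f x - fhat t ω x) ^ 2) / πt t ω x - v x / π x) ∂μX)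
      atTop (fun _ => (0 : ℝ)) := by
  have hπt : ∀ t ω x, πt t ω x ∈ Set.Icc (1 / k t) 1 := fun t ω x =>
    Set.Icc_subset_Icc_right (sub_le_self _ (one_div_pos.mpr (by linarith [hk t])).le)
      (hπtbd t ω x)
  have hbound := fun t ω => abs_integral_variance_gap_le (μ := μX) (p := πt t ω)
    hv hvbd hπ hπ01 hπbd (by linarith [hk t]) ((hπtmeas t).comp measurable_prodMk_left)
    (hπt t ω) f (fhat t ω)
  have hQ := hQconv.comp_continuousAt (φ := fun y => Cv * C₁ * y) (by fun_prop)
  have hN := hNconv.comp_continuousAt (φ := fun y => y ^ 2) (by fun_prop)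
  refine TendstoInMeasure.of_norm_le (by simpa using hQ.add hN) fun t ω => ?_
  exact (hbound t ω).trans (le_abs_self _)

/-- Lemma 1: convergence of the first term in the conditional-variance
decomposition of the A2IPW martingale difference sequence. -/
theorem a2ipw_variance_first_term_converges
    {X : Type*} [mX : MeasurableSpace X] (μX : Measure X) [IsProbabilityMeasure μX]
    (v π f : X → ℝ) (Cv C₁ : ℝ)
    (hv : Measurable v) (hvbd : ∀ x, v x ∈ Set.Icc 0 Cv)
    (hπ : Measurable π) (hπ01 : ∀ x, π x ∈ Set.Ioo (0 : ℝ) 1)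
    (hπbd : ∀ x, 1 / π x ≤ C₁)
    (hf : Measurable f)
    {Ω : Type*} [MeasurableSpace Ω] (μ : Measure Ω) [IsProbabilityMeasure μ]
    (k : ℕ → ℝ) (hk : ∀ t, 2 ≤ k t)
    (fhat : ℕ → Ω → X → ℝ) (πt : ℕ → Ω → X → ℝ)
    (hfhatmeas : ∀ t, Measurable (fun p : Ω × X => fhat t p.1 p.2))
    (hπtmeas : ∀ t, Measurable (fun p : Ω × X => πt t p.1 p.2))
    (hπtbd : ∀ t ω x, πt t ω x ∈ Set.Icc (1 / k t) (1 - 1 / k t))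
    (hNconv : TendstoInMeasure μ
      (fun t ω => k t * Real.sqrt (∫ x, (fhat t ω x - f x) ^ 2 ∂μX))
      atTop (fun _ => (0 : ℝ)))
    (hQconv : TendstoInMeasure μ
      (fun t ω => k t * Real.sqrt (∫ x, (πt t ω x - π x) ^ 2 ∂μX))
      atTop (fun _ => (0 : ℝ))) :
    TendstoInMeasure μ
      (fun t ω => ∫ x, ((v x + (f x - fhat t ω x) ^ 2) / πt t ω x - v x / π x) ∂μX)
      atTop (fun _ => (0 : ℝ)) :=
  a2ipw_variance_first_term_converges_general (mX := mX) μX v π f Cv C₁ hv hvbd hπ hπ01 hπbd μ k hk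
    fhat πt hπtmeas hπtbd hNconv hQconv
end

section
/- Let (Ω, F, P) be a probability space with filtration (F_t)_{t≥0}, let θ0 ∈ [−1, 1], let α ∈ (0, 1), let (k_t)_{t≥1} be real numbers with k_t ∈ [2, ∞), and let (h_t)_{t≥1} be integrable random variables with h_t F_t-measurable, h_t ∈ [−k_t, k_t] almost surely, and E[h_t | F_{t−1}] = θ0 almost surely for every t. Let (λ_t)_{t≥1} be a predictable sequence (λ_t F_{t−1}-measurable) such that almost surely both 1 + λ_t·(h_t − θ0) ≥ 0 and 1 − λ_t·(h_t − θ0) ≥ 0 (for example, |λ_t| ≤ 1/(k_t + 1)). Define K_T⁺ := ∏_{t=1}^T (1 + λ_t(h_t − θ0)), K_T⁻ := ∏_{t=1}^T (1 − λ_t(h_t − θ0)), and M_T := (K_T⁺ + K_T⁻)/2. Then M_T is a nonnegative martingale with M_0 = 1, and P( for all T ≥ 1, M_T < 1/α ) ≥ 1 − α; in particular, with probability at least 1 − α, θ0 belongs to the hedged confidence set C_T^Hedged := ∩_{t ≤ T} { θ' ∈ [−1,1] : (∏_{s≤t}(1 + λ_s(θ')(h_s − θ')) + ∏_{s≤t}(1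 − λ_s(θ')(h_s − θ')))/2 < 1/α } simultaneously for every T ≥ 1. -/
open MeasureTheory ProbabilityTheory Filter
open scoped ENNReal NNReal

/-- Auxiliary: a capital (product) process with predictable bets is a martingale. -/
theorem hedged_cs_aux_mart
    {Ω : Type*} {m0 : MeasurableSpace Ω} (μ : Measure Ω) [IsProbabilityMeasure μ]
    (ℱ : Filtration ℕ m0) (θ0 : ℝ)
    (h : ℕ → Ω → ℝ) (c : ℕ → Ω → ℝ)
    (hint : ∀ t, Integrable (h t) μ)
    (hadapted : ∀ t, Measurable[ℱ t] (h t))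
    (hcond : ∀ t, 1 ≤ t → μ[h t | ℱ (t - 1)] =ᵐ[μ] fun _ => θ0)
    (hpred : ∀ t, 1 ≤ t → Measurable[ℱ (t - 1)] (c t))
    (hbd1 : ∀ t, 1 ≤ t → ∀ᵐ ω ∂μ, |c t ω * (h t ω - θ0)| ≤ 1) :
    Martingale (fun T ω => ∏ t ∈ Finset.Icc 1 T, (1 + c t ω * (h t ω - θ0))) ℱ μ := by
  set P : ℕ → Ω → ℝ := fun T ω => ∏ t ∈ Finset.Icc 1 T, (1 + c t ω * (h t ω - θ0)) with hP
  have hmeas : ∀ T, Measurable[ℱ T] (P T) := by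
    intro T
    apply Finset.measurable_prod
    intro t ht
    simp only [Finset.mem_Icc] at ht
    have h1 : Measurable[ℱ T] (h t) := (hadapted t).mono (ℱ.mono ht.2) le_rfl
    have h2 : Measurable[ℱ T] (c t) :=
      (hpred t ht.1).mono (ℱ.mono ((Nat.sub_le t 1).trans ht.2)) le_rfl
    exact measurable_const.add (h2.mul (h1.sub measurable_const))
  -- a.e. bound on each factor
  have hfac : ∀ T, ∀ᵐ ω ∂μ, ∀ t ∈ Finset.Icc 1 T, |1 + c t ω * (h t ω - θ0)| ≤ 2 := by
    intro T
    have : ∀ᵐ ω ∂μ, ∀ t ∈ (↑(Finset.Icc 1 T) : Set ℕ), |1 + c t ω * (h t ω - θ0)| ≤ 2 := by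
      rw [ae_ball_iff (Finset.countable_toSet _)]
      intro t ht
      simp only [Finset.mem_coe, Finset.mem_Icc] at ht
      filter_upwards [hbd1 t ht.1] with ω hω
      have := abs_le.1 hω
      rw [abs_le]; constructor <;> linarith
    filter_upwards [this] with ω hω t ht
    exact hω t ht
  have hbdP : ∀ T, ∀ᵐ ω ∂μ, |P T ω| ≤ 2 ^ T := by
    intro T
    filter_upwards [hfac T] with ω hω
    calc |P T ω| = ∏ t ∈ Finset.Icc 1 T, |1 + c t ω * (h t ω - θ0)| := by
          rw [hP]; exact Finset.abs_prod _ _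
      _ ≤ ∏ t ∈ Finset.Icc 1 T, (2 : ℝ) :=
          Finset.prod_le_prod (fun t _ => abs_nonneg _) (fun t ht => hω t ht)
      _ = 2 ^ (Finset.Icc 1 T).card := Finset.prod_const _
      _ ≤ 2 ^ T := by
          apply pow_le_pow_right₀ (by norm_num)
          simp [Nat.card_Icc]
  have hintP : ∀ T, Integrable (P T) μ := by
    intro T
    refine Integrable.mono' (integrable_const ((2 : ℝ) ^ T))
      ((hmeas T).le (ℱ.le T)).aestronglyMeasurable ?_
    filter_upwards [hbdP T] with ω hω using hω
  refine martingale_nat (fun T => ((hmeas T).stronglyMeasurable)) hintP ?_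
  intro n
  -- P (n+1) ω = P n ω + (P n ω * c (n+1) ω) * (h (n+1) ω - θ0)
  have key : P (n + 1) = fun ω => P n ω +
      (P n ω * c (n + 1) ω) * (h (n + 1) ω - θ0) := by
    funext ω
    rw [hP]
    simp only
    rw [Finset.prod_Icc_succ_top (by omega)]
    ring
  have hfmeas : StronglyMeasurable[ℱ n] (fun ω => P n ω * c (n + 1) ω) := by
    have : Measurable[ℱ n] (fun ω => P n ω * c (n + 1) ω) :=
      (hmeas n).mul (by simpa using hpred (n + 1) (by omega))
    exact this.stronglyMeasurable
  have hintfg : Integrable (fun ω => (P n ω * c (n + 1) ω) * (h (n + 1) ω - θ0)) μ := by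
    refine Integrable.mono' (integrable_const ((2 : ℝ) ^ n))
      ?_ ?_
    · exact (((hmeas n).le (ℱ.le n)).mul
        (((hpred (n+1) (by omega)).le ((ℱ.le _))).mono (by simp [ℱ.le]) le_rfl)).mul
        (((hadapted (n+1)).le (ℱ.le _)).sub measurable_const) |>.aestronglyMeasurable
    · filter_upwards [hbdP n, hbd1 (n + 1) (by omega)] with ω h1 h2
      rw [mul_assoc, norm_mul, Real.norm_eq_abs, Real.norm_eq_abs]
      calc |P n ω| * |c (n+1) ω * (h (n+1) ω - θ0)| ≤ 2 ^ n * 1 :=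
            mul_le_mul h1 h2 (abs_nonneg _) (by positivity)
        _ = 2 ^ n := mul_one _
  have hintg : Integrable (fun ω => h (n + 1) ω - θ0) μ :=
    (hint (n + 1)).sub (integrable_const _)
  have hcond0 : μ[fun ω => h (n + 1) ω - θ0 | ℱ n] =ᵐ[μ] fun _ => 0 := by
    have h1 := condExp_sub (m := ℱ n) (hint (n + 1)) (integrable_const θ0)
    have h2 := hcond (n + 1) (by omega)
    simp only [Nat.add_sub_cancel] at h2
    refine h1.trans ?_
    have h3 : μ[(fun _ => θ0 : Ω → ℝ) | ℱ n] = fun _ => θ0 := condExp_const (ℱ.le n) θ0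
    filter_upwards [h2] with ω hω
    simp only [Pi.sub_apply, hω, h3, sub_self]
  have hpull : μ[(fun ω => P n ω * c (n + 1) ω) * (fun ω => h (n + 1) ω - θ0) | ℱ n]
      =ᵐ[μ] (fun ω => P n ω * c (n + 1) ω) * μ[fun ω => h (n + 1) ω - θ0 | ℱ n] :=
    condExp_mul_of_stronglyMeasurable_left hfmeas (by simpa [Pi.mul_def] using hintfg) hintg
  have hPn : μ[P n | ℱ n] =ᵐ[μ] P n := Filter.EventuallyEq.of_eq <|
    condExp_of_stronglyMeasurable (ℱ.le n) (hmeas n).stronglyMeasurable (hintP n)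
  rw [key]
  have hadd : μ[(fun ω => P n ω + (P n ω * c (n + 1) ω) * (h (n + 1) ω - θ0)) | ℱ n]
      =ᵐ[μ] μ[P n | ℱ n] + μ[(fun ω => (P n ω * c (n + 1) ω) * (h (n + 1) ω - θ0)) | ℱ n] :=
    condExp_add (hintP n) hintfg (ℱ n)
  refine EventuallyEq.symm (hadd.trans ?_)
  have : μ[(fun ω => (P n ω * c (n + 1) ω) * (h (n + 1) ω - θ0)) | ℱ n] =ᵐ[μ] fun _ => 0 := by
    refine (EventuallyEq.trans ?_ hpull).trans ?_
    · rfl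
    · filter_upwards [hcond0] with ω hω
      simp [hω]
  filter_upwards [hPn, this] with ω h1 h2
  simp [h1, h2]

set_option synthInstance.maxHeartbeats 1000000 in
set_option maxHeartbeats 1000000 in
/-- Theorem 2: the hedged capital process is a nonnegative test martingale and
the hedged confidence sequence has time-uniform coverage 1 - α. -/
theorem hedged_cs
    {Ω : Type*} {m0 : MeasurableSpace Ω} (μ : Measure Ω) [IsProbabilityMeasure μ]
    (ℱ : Filtration ℕ m0) (θ0 : ℝ) (hθ0 : θ0 ∈ Set.Icc (-1 : ℝ) 1)
    (α : ℝ) (hα : α ∈ Set.Ioo (0 : ℝ) 1)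
    (k : ℕ → ℝ) (hk : ∀ t, 2 ≤ k t)
    (h : ℕ → Ω → ℝ) (lam : ℕ → ℝ → Ω → ℝ)
    (hint : ∀ t, Integrable (h t) μ)
    (hadapted : ∀ t, Measurable[ℱ t] (h t))
    (hbd : ∀ t, 1 ≤ t → ∀ᵐ ω ∂μ, h t ω ∈ Set.Icc (-(k t)) (k t))
    (hcond : ∀ t, 1 ≤ t → μ[h t | ℱ (t - 1)] =ᵐ[μ] fun _ => θ0)
    (hpred : ∀ t, 1 ≤ t → Measurable[ℱ (t - 1)] (lam t θ0))
    (hlamnonneg : ∀ t, 1 ≤ t → ∀ᵐ ω ∂μ,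
      0 ≤ 1 + lam t θ0 ω * (h t ω - θ0) ∧ 0 ≤ 1 - lam t θ0 ω * (h t ω - θ0)) :
    Martingale (fun T ω =>
        ((∏ t ∈ Finset.Icc 1 T, (1 + lam t θ0 ω * (h t ω - θ0)))
          + ∏ t ∈ Finset.Icc 1 T, (1 - lam t θ0 ω * (h t ω - θ0))) / 2) ℱ μ ∧
      (∀ T, ∀ᵐ ω ∂μ, 0 ≤
        ((∏ t ∈ Finset.Icc 1 T, (1 + lam t θ0 ω * (h t ω - θ0)))
          + ∏ t ∈ Finset.Icc 1 T, (1 - lam t θ0 ω * (h t ω - θ0))) / 2) ∧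
      (∀ ω, ((∏ t ∈ Finset.Icc 1 0, (1 + lam t θ0 ω * (h t ω - θ0)))
          + ∏ t ∈ Finset.Icc 1 0, (1 - lam t θ0 ω * (h t ω - θ0))) / 2 = 1) ∧
      ENNReal.ofReal (1 - α) ≤ μ {ω | ∀ T, 1 ≤ T →
        ((∏ t ∈ Finset.Icc 1 T, (1 + lam t θ0 ω * (h t ω - θ0)))
          + ∏ t ∈ Finset.Icc 1 T, (1 - lam t θ0 ω * (h t ω - θ0))) / 2 < 1 / α} ∧
      ENNReal.ofReal (1 - α) ≤ μ {ω | ∀ T, 1 ≤ T → θ0 ∈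
        {θ' : ℝ | θ' ∈ Set.Icc (-1 : ℝ) 1 ∧ ∀ t, 1 ≤ t → t ≤ T →
          ((∏ s ∈ Finset.Icc 1 t, (1 + lam s θ' ω * (h s ω - θ')))
            + ∏ s ∈ Finset.Icc 1 t, (1 - lam s θ' ω * (h s ω - θ'))) / 2 < 1 / α}} := by
  have hbd1 : ∀ t, 1 ≤ t → ∀ᵐ ω ∂μ, |lam t θ0 ω * (h t ω - θ0)| ≤ 1 := by
    intro t ht
    filter_upwards [hlamnonneg t ht] with ω hω
    exact abs_le.2 ⟨by linarith [hω.1], by linarith [hω.2]⟩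
  -- the two one-sided capital processes
  have hKp : Martingale (fun T ω => ∏ t ∈ Finset.Icc 1 T,
      (1 + lam t θ0 ω * (h t ω - θ0))) ℱ μ :=
    hedged_cs_aux_mart μ ℱ θ0 h (fun t => lam t θ0) hint hadapted hcond hpred hbd1
  have hKm : Martingale (fun T ω => ∏ t ∈ Finset.Icc 1 T,
      (1 - lam t θ0 ω * (h t ω - θ0))) ℱ μ := by
    have := hedged_cs_aux_mart μ ℱ θ0 h (fun t ω => -(lam t θ0 ω)) hint hadapted hcond
      (fun t ht => (hpred t ht).neg)
      (by intro t ht; filter_upwards [hbd1 t ht] with ω hω; rwa [neg_mul, abs_neg])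
    have heq : (fun T ω => ∏ t ∈ Finset.Icc 1 T, (1 - lam t θ0 ω * (h t ω - θ0)))
        = fun T ω => ∏ t ∈ Finset.Icc 1 T,
            (1 + (fun t ω => -(lam t θ0 ω)) t ω * (h t ω - θ0)) := by
      funext T ω
      exact Finset.prod_congr rfl fun t _ => by ring
    rw [heq]
    exact this
  set M : ℕ → Ω → ℝ := fun T ω =>
    ((∏ t ∈ Finset.Icc 1 T, (1 + lam t θ0 ω * (h t ω - θ0)))
      + ∏ t ∈ Finset.Icc 1 T, (1 - lam t θ0 ω * (h t ω - θ0))) / 2 with hMdef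
  have hmart : Martingale M ℱ μ := by
    have := (hKp.add hKm).smul (2⁻¹ : ℝ)
    convert this using 1
    funext T ω
    simp only [hMdef, Pi.smul_apply, Pi.add_apply, smul_eq_mul]
    ring
  have hMnn : ∀ T, ∀ᵐ ω ∂μ, 0 ≤ M T ω := by
    intro T
    have hae : ∀ᵐ ω ∂μ, ∀ t ∈ (↑(Finset.Icc 1 T) : Set ℕ),
        0 ≤ 1 + lam t θ0 ω * (h t ω - θ0) ∧ 0 ≤ 1 - lam t θ0 ω * (h t ω - θ0) := by
      rw [ae_ball_iff (Finset.countable_toSet _)]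
      intro t ht
      simp only [Finset.mem_coe, Finset.mem_Icc] at ht
      exact hlamnonneg t ht.1
    filter_upwards [hae] with ω hω
    have h1 : 0 ≤ ∏ t ∈ Finset.Icc 1 T, (1 + lam t θ0 ω * (h t ω - θ0)) :=
      Finset.prod_nonneg fun t ht => (hω t ht).1
    have h2 : 0 ≤ ∏ t ∈ Finset.Icc 1 T, (1 - lam t θ0 ω * (h t ω - θ0)) :=
      Finset.prod_nonneg fun t ht => (hω t ht).2
    rw [hMdef]
    positivity
  have hM0 : ∀ ω, M 0 ω = 1 := by intro ω; simp [hMdef]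
  -- expectation is 1 for all n
  have hintM : ∀ n, ∫ ω, M n ω ∂μ = 1 := by
    intro n
    have h1 : μ[M n | ℱ 0] =ᵐ[μ] M 0 := hmart.2 0 n (Nat.zero_le n)
    have h2 : ∫ ω, (μ[M n | ℱ 0]) ω ∂μ = ∫ ω, M n ω ∂μ := integral_condExp (ℱ.le 0)
    have h3 : ∫ ω, (μ[M n | ℱ 0]) ω ∂μ = ∫ ω, M 0 ω ∂μ := integral_congr_ae h1
    have h4 : ∫ ω, M 0 ω ∂μ = 1 := by
      rw [show (fun ω => M 0 ω) = fun _ => (1 : ℝ) from funext hM0]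
      simp
    rw [← h2, h3, h4]
  -- Ville's inequality via Doob's maximal inequality applied to the positive part
  have hsub : Submartingale (M⁺) ℱ μ := hmart.submartingale.pos
  set ε : NNReal := ⟨1 / α, le_of_lt (one_div_pos.2 hα.1)⟩ with hεdef
  have hεcoe : (ε : ℝ) = 1 / α := rfl
  have hS : ∀ n, μ {ω | (ε : ℝ) ≤ (Finset.range (n + 1)).sup'
      Finset.nonempty_range_add_one fun j => (M⁺) j ω} ≤ ENNReal.ofReal α := by
    intro n
    set S : Set Ω := {ω | (ε : ℝ) ≤ (Finset.range (n + 1)).sup'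
        Finset.nonempty_range_add_one fun j => (M⁺) j ω} with hSdef
    have hnn : (0 : ℕ → Ω → ℝ) ≤ M⁺ := fun i ω => le_max_right _ _
    have h1 : ε • μ S ≤ ENNReal.ofReal (∫ ω in S, (M⁺) n ω ∂μ) := maximal_ineq hsub hnn n
    have h2 : ∫ ω in S, (M⁺) n ω ∂μ ≤ ∫ ω, (M⁺) n ω ∂μ :=
      setIntegral_le_integral (hsub.integrable n)
        (Filter.Eventually.of_forall fun ω => le_max_right _ _)
    have h3 : ∫ ω, (M⁺) n ω ∂μ = 1 := by
      rw [← hintM n]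
      refine integral_congr_ae ?_
      filter_upwards [hMnn n] with ω hω
      exact max_eq_left hω
    have h4 : (ε : ℝ≥0∞) * μ S ≤ 1 := by
      have := h1.trans (ENNReal.ofReal_le_ofReal h2)
      rw [h3] at this
      simpa [ENNReal.smul_def] using this
    have h5 : μ S ≤ (ε : ℝ≥0∞)⁻¹ :=
      ENNReal.le_inv_iff_mul_le.2 (by rwa [mul_comm])
    refine h5.trans (le_of_eq ?_)
    have hε : (ε : ℝ≥0∞) = ENNReal.ofReal (1 / α) :=
      (ENNReal.ofReal_eq_coe_nnreal _).symm
    rw [hε, ← ENNReal.ofReal_inv_of_pos (one_div_pos.2 hα.1)]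
    congr 1
    rw [one_div, inv_inv]
  set B : ℕ → Set Ω := fun n => {ω | ∃ T, 1 ≤ T ∧ T ≤ n ∧ 1 / α ≤ M T ω} with hBdef
  have hBsub : ∀ n, B n ⊆ {ω | (ε : ℝ) ≤ (Finset.range (n + 1)).sup'
      Finset.nonempty_range_add_one fun j => (M⁺) j ω} := by
    rintro n ω ⟨T, hT1, hT2, hT3⟩
    have hmem : T ∈ Finset.range (n + 1) := Finset.mem_range.2 (by omega)
    refine le_trans ?_ (Finset.le_sup' (fun j => (M⁺) j ω) hmem)
    calc (ε : ℝ) = 1 / α := hεcoe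
      _ ≤ M T ω := hT3
      _ ≤ (M⁺) T ω := le_max_left _ _
  have hB : ∀ n, μ (B n) ≤ ENNReal.ofReal α := fun n =>
    (measure_mono (hBsub n)).trans (hS n)
  have hMmeas : ∀ T, Measurable (M T) :=
    fun T => ((hmart.stronglyAdapted T).measurable).le (ℱ.le T)
  have hBmeas : ∀ n, MeasurableSet (B n) := by
    intro n
    have : B n = ⋃ T, {ω | 1 ≤ T ∧ T ≤ n ∧ 1 / α ≤ M T ω} := by
      ext ω
      constructor
      · rintro ⟨T, h1, h2, h3⟩; exact Set.mem_iUnion.2 ⟨T, h1, h2, h3⟩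
      · intro hω; obtain ⟨T, h1, h2, h3⟩ := Set.mem_iUnion.1 hω; exact ⟨T, h1, h2, h3⟩
    rw [this]
    refine MeasurableSet.iUnion fun T => ?_
    by_cases hT : 1 ≤ T ∧ T ≤ n
    · have : {ω | 1 ≤ T ∧ T ≤ n ∧ 1 / α ≤ M T ω} = {ω | 1 / α ≤ M T ω} := by
        ext ω; simp [hT.1, hT.2]
      rw [this]
      exact measurableSet_le measurable_const (hMmeas T)
    · have : {ω | 1 ≤ T ∧ T ≤ n ∧ 1 / α ≤ M T ω} = ∅ := by
        ext ω; simp only [Set.mem_setOf_eq, Set.mem_empty_iff_false, iff_false]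
        rintro ⟨h1, h2, _⟩; exact hT ⟨h1, h2⟩
      rw [this]; exact MeasurableSet.empty
  have hBmono : Monotone B := by
    intro a b hab ω hω
    obtain ⟨T, h1, h2, h3⟩ := hω
    exact ⟨T, h1, h2.trans hab, h3⟩
  have hBadμ : μ (⋃ n, B n) ≤ ENNReal.ofReal α := by
    rw [hBmono.directed_le.measure_iUnion]
    exact iSup_le hB
  have hBadmeas : MeasurableSet (⋃ n, B n) := MeasurableSet.iUnion hBmeas
  have hGood : {ω | ∀ T, 1 ≤ T → M T ω < 1 / α} = (⋃ n, B n)ᶜ := by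
    ext ω
    simp only [Set.mem_setOf_eq, Set.mem_compl_iff, Set.mem_iUnion]
    constructor
    · rintro hg ⟨n, T, h1, h2, h3⟩
      exact absurd h3 (not_le.2 (hg T h1))
    · intro hb T hT
      by_contra hc
      exact hb ⟨T, T, hT, le_rfl, le_of_not_gt hc⟩
  have hGoodμ : ENNReal.ofReal (1 - α) ≤ μ {ω | ∀ T, 1 ≤ T → M T ω < 1 / α} := by
    rw [hGood, prob_compl_eq_one_sub hBadmeas]
    calc ENNReal.ofReal (1 - α) = 1 - ENNReal.ofReal α := by
          rw [ENNReal.ofReal_sub _ hα.1.le, ENNReal.ofReal_one]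
      _ ≤ 1 - μ (⋃ n, B n) := tsub_le_tsub_left hBadμ 1
  refine ⟨hmart, hMnn, hM0, hGoodμ, hGoodμ.trans (measure_mono ?_)⟩
  intro ω hω T hT
  exact ⟨hθ0, fun t ht1 _ => hω t ht1⟩
end

section
/- Define ψ_E(λ) := −log(1 − λ) − λ for λ ∈ [0, 1). Then for every λ ∈ [0, 1) and every real y ≥ −1, exp( λ·y − y²·ψ_E(λ) ) ≤ 1 + λ·y; equivalently, λ·y − y²·ψ_E(λ) ≤ log(1 + λ·y) whenever 1 + λ·y > 0, with the boundary case y = −1 holding with equality. -/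
/-!
For fixed `y ≥ -1`, the function `λ ↦ log (1 + λ y) - λ y + y² ψ_E(λ)` vanishes at `λ = 0` and
has derivative `λ² y² (1 + y) / ((1 - λ) (1 + λ y)) ≥ 0` on `[0, 1)`, since `ψ_E'(λ) = λ / (1 - λ)`
and `1 + λ y ≥ 1 - λ > 0`. Exponentiating gives the bound; at `y = -1` the exponent is exactly
`log (1 - λ)`.
-/

open Real Set

noncomputable def psiE (lam : ℝ) : ℝ := -log (1 - lam) - lam

lemma hasDerivAt_psiE {t : ℝ} (ht : t ≠ 1) : HasDerivAt psiE (t / (1 - t)) t := by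
  have h1t : 1 - t ≠ 0 := sub_ne_zero.2 ht.symm
  exact ((((hasDerivAt_id' t).const_sub 1).log h1t).neg.sub (hasDerivAt_id' t)).congr_deriv
    (by field_simp; ring)

lemma mul_sub_sq_mul_psiE_le_log {lam y : ℝ} (hlam : lam ∈ Ico (0 : ℝ) 1) (hy : -1 ≤ y) :
    lam * y - y ^ 2 * psiE lam ≤ log (1 + lam * y) := by
  set G : ℝ → ℝ := fun t ↦ log (1 + t * y) - t * y + y ^ 2 * psiE t
  have hG {t : ℝ} (ht : t ∈ Ico (0 : ℝ) 1) :
      HasDerivAt G (t ^ 2 * y ^ 2 * (1 + y) / ((1 - t) * (1 + t * y))) t := by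
    have h1t : 1 - t ≠ 0 := (sub_pos.2 ht.2).ne'
    -- `field_simp` normalises `1 + t * y` to `1 + y * t` before looking for this hypothesis
    have h1yt : 1 + y * t ≠ 0 := by nlinarith [ht.1, ht.2]
    have hlin := (hasDerivAt_id' t).mul_const y
    exact (((hlin.const_add 1).log (by rwa [mul_comm])).sub hlin).add
      ((hasDerivAt_psiE ht.2.ne).const_mul (y ^ 2)) |>.congr_deriv (by field_simp; ring)
  have hmono : MonotoneOn G (Ico 0 1) := by
    refine monotoneOn_of_hasDerivWithinAt_nonneg (convex_Ico 0 1)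
      (fun t ht ↦ (hG ht).continuousAt.continuousWithinAt)
      (fun t ht ↦ (hG (interior_subset ht)).hasDerivWithinAt) ?_
    intro t ht
    rw [interior_Ico] at ht
    have h1y : 0 ≤ 1 + y := by linarith
    have h1ty : 0 < 1 + t * y := by nlinarith [ht.1, ht.2]
    exact div_nonneg (mul_nonneg (by positivity) h1y) (mul_pos (sub_pos.2 ht.2) h1ty).le
  have hG0 : G 0 = 0 := by simp [G, psiE]
  have hGlam : G 0 ≤ G lam := hmono ⟨le_rfl, zero_lt_one⟩ hlam hlam.1
  rw [hG0] at hGlam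
  linarith

/-- The scalar exponential inequality underlying the empirical-Bernstein
test supermartingale, with `ψ_E(λ) = -log(1-λ) - λ`. -/
theorem exp_le_one_add_of_empirical_bernstein
    (lam : ℝ) (hlam : lam ∈ Set.Ico (0 : ℝ) 1) (y : ℝ) (hy : -1 ≤ y) :
    Real.exp (lam * y - y ^ 2 * (-Real.log (1 - lam) - lam)) ≤ 1 + lam * y ∧
      (0 < 1 + lam * y →
        lam * y - y ^ 2 * (-Real.log (1 - lam) - lam) ≤ Real.log (1 + lam * y)) ∧
      Real.exp (lam * (-1 : ℝ) - (-1 : ℝ) ^ 2 * (-Real.log (1 - lam) - lam))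
        = 1 + lam * (-1 : ℝ) := by
  have hlog : lam * y - y ^ 2 * psiE lam ≤ log (1 + lam * y) :=
    mul_sub_sq_mul_psiE_le_log hlam hy
  have hpos : 0 < 1 + lam * y := by nlinarith [hlam.1, hlam.2]
  refine ⟨(exp_le_exp.2 hlog).trans_eq (exp_log hpos), fun _ ↦ hlog, ?_⟩
  rw [show lam * (-1 : ℝ) - (-1 : ℝ) ^ 2 * (-log (1 - lam) - lam) = log (1 - lam) by ring,
    exp_log (sub_pos.2 hlam.2)]
  ring
end

section
/- Let (Ω, F, P) be a probability space with filtration (F_t)_{t≥0}, let θ0 ∈ [−1, 1], let α ∈ (0, 1), let (k_t)_{t≥1} be real numbers with k_t ∈ [2, ∞), and let (h_t)_{t≥1} be random variables with h_t F_t-measurable, |h_t| ≤ k_t almost surely, and E[h_t | F_{t−1}] = θ0 almost surely for every t. Define ξ_t := h_t/(k_t + 1) and ξ_t⁻ := −h_t/(k_t + 1); define the predictable truncated running means ξ̂_{t−1} := min( (1/(t−1))Σ_{i=1}^{t−1} ξ_i , 1/(k_t + 1) ) and ξ̂_{t−1}⁻ := min( (1/(t−1))Σ_{i=1}^{t−1}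 ξ_i⁻ , 1/(k_t + 1) ) for t ≥ 2, with ξ̂_0 := 0 and ξ̂_0⁻ := 0; and define ψ_E(λ) := −log(1 − λ) − λ. Let (λ_t)_{t≥1} be a predictable sequence with λ_t ∈ (0, 1) almost surely. For T ≥ 1 define D_T := Σ_{t=1}^T λ_t/(k_t + 1), L_T := ( Σ_{t=1}^T λ_t ξ_t − log(2/α) − Σ_{t=1}^T (ξ_t − ξ̂_{t−1})² ψ_E(λ_t) ) / D_T, and U_T := ( Σ_{t=1}^T λ_t ξ_t + log(2/α) + Σ_{t=1}^T (ξ_t⁻ − ξ̂_{t−1}⁻)² ψ_E(λ_t) ) / D_T. Then P( for all T ≥ 1, L_T ≤ θ0 ≤ U_T ) ≥ 1 − α. -/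
open MeasureTheory ProbabilityTheory Filter


lemma fan_ineq {x l : ℝ} (hx : -1 ≤ x) (hl0 : 0 ≤ l) (hl1 : l < 1) :
    l * x + x ^ 2 * (Real.log (1 - l) + l) ≤ Real.log (1 + l * x) := by
  rcases eq_or_lt_of_le hl0 with rfl | hl0'
  · simp
  set F : ℝ → ℝ := fun s => Real.log (1 + s * x) - s * x - x ^ 2 * (Real.log (1 - s) + s) with hF
  have hpos : ∀ s ∈ Set.Icc (0:ℝ) l, 0 < 1 + s * x ∧ 0 < 1 - s := by
    intro s hs
    have h1 : 1 + s * x ≥ 1 - s := by nlinarith [hs.1, hs.2]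
    have h2 : (0:ℝ) < 1 - s := by linarith [hs.2]
    exact ⟨lt_of_lt_of_le h2 h1, h2⟩
  have hderiv : ∀ s ∈ Set.Icc (0:ℝ) l, HasDerivAt F
      (x / (1 + s * x) - x - x ^ 2 * (-1 / (1 - s) + 1)) s := by
    intro s hs
    obtain ⟨hp1, hp2⟩ := hpos s hs
    have d1 : HasDerivAt (fun s : ℝ => 1 + s * x) x s := by
      simpa using ((hasDerivAt_id s).mul_const x).const_add 1
    have d2 : HasDerivAt (fun s : ℝ => 1 - s) (-1) s := by
      exact (hasDerivAt_id' s).const_sub 1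
    have dlog1 : HasDerivAt (fun s : ℝ => Real.log (1 + s * x)) (x / (1 + s * x)) s := by
      simpa using d1.log hp1.ne'
    have dlog2 : HasDerivAt (fun s : ℝ => Real.log (1 - s)) (-1 / (1 - s)) s := by
      simpa using d2.log hp2.ne'
    have : HasDerivAt (fun s : ℝ => x ^ 2 * (Real.log (1 - s) + s))
        (x ^ 2 * (-1 / (1 - s) + 1)) s := ((dlog2.add (hasDerivAt_id s)).const_mul (x ^ 2))
    exact ((dlog1.sub ((hasDerivAt_id' s).mul_const x)).sub this).congr_deriv (by ring)
  have hmono : MonotoneOn F (Set.Icc 0 l) := by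
    apply monotoneOn_of_deriv_nonneg (convex_Icc 0 l)
    · exact fun s hs => ((hderiv s hs).continuousAt).continuousWithinAt
    · intro s hs
      rw [interior_Icc] at hs
      exact ((hderiv s (Set.mem_Icc_of_Ioo hs)).differentiableAt).differentiableWithinAt
    · intro s hs
      rw [interior_Icc] at hs
      obtain ⟨hp1, hp2⟩ := hpos s (Set.mem_Icc_of_Ioo hs)
      rw [(hderiv s (Set.mem_Icc_of_Ioo hs)).deriv]
      have key : x / (1 + s * x) - x - x ^ 2 * (-1 / (1 - s) + 1)
          = s * x ^ 2 * (1 / (1 - s) - 1 / (1 + s * x)) := by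
        have ha : (1 + s * x)⁻¹ * (1 + s * x) = 1 := inv_mul_cancel₀ hp1.ne'
        have hb : (1 - s)⁻¹ * (1 - s) = 1 := inv_mul_cancel₀ hp2.ne'
        simp only [div_eq_mul_inv, one_mul]
        linear_combination x * ha + x ^ 2 * hb
      rw [key]
      have h12 : 1 - s ≤ 1 + s * x := by nlinarith [hs.1.le, hs.2]
      have hdivle : 1 / (1 + s * x) ≤ 1 / (1 - s) := one_div_le_one_div_of_le hp2 h12
      exact mul_nonneg (mul_nonneg hs.1.le (sq_nonneg x)) (sub_nonneg.2 hdivle)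
  have h0 : F 0 = 0 := by simp [hF]
  have := hmono (Set.mem_Icc.2 ⟨le_refl 0, hl0⟩) (Set.mem_Icc.2 ⟨hl0, le_refl l⟩) hl0
  rw [h0] at this
  simp only [hF] at this
  linarith


lemma ville {Ω : Type*} {m0 : MeasurableSpace Ω} {μ : Measure Ω} [IsProbabilityMeasure μ]
    {𝒢 : Filtration ℕ m0} {M : ℕ → Ω → ℝ} (hM : Supermartingale M 𝒢 μ)
    (hnn : ∀ n ω, 0 ≤ M n ω) {c : ℝ} (hc : 0 < c) :
    μ {ω | ∃ n, c ≤ M n ω} ≤ ENNReal.ofReal ((∫ ω, M 0 ω ∂μ) / c) := by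
  have hmeasM : ∀ n, Measurable (M n) :=
    fun n => (hM.stronglyMeasurable n).measurable.le (𝒢.le n)
  set A : ℕ → Set Ω := fun n => ⋃ j ≤ n, {ω | c ≤ M j ω} with hA
  have hAmeas : ∀ n, MeasurableSet (A n) := fun n =>
    MeasurableSet.biUnion (Set.to_countable _)
      (fun j _ => measurableSet_le measurable_const (hmeasM j))
  have hAmono : Monotone A := fun a b hab =>
    Set.iUnion₂_mono' (fun j hj => ⟨j, hj.trans hab, subset_rfl⟩)
  -- finite-horizon bound
  have key : ∀ n, μ (A n) ≤ ENNReal.ofReal ((∫ ω, M 0 ω ∂μ) / c) := by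
    intro n
    set τ : Ω → WithTop ℕ := fun ω => ((hittingBtwn M (Set.Ici c) 0 n ω : ℕ) : WithTop ℕ) with hτdef
    have hτ : IsStoppingTime 𝒢 τ := hM.stronglyAdapted.adapted.isStoppingTime_hittingBtwn measurableSet_Ici
    have hτle : ∀ ω, τ ω ≤ n := fun ω => WithTop.coe_le_coe.2 (hittingBtwn_le ω)
    have hsv_int : Integrable (stoppedValue M τ) μ := by
      have heq : stoppedValue (-M) τ = -(stoppedValue M τ) := rfl
      have := (hM.neg.integrable_stoppedValue hτ hτle)
      rw [heq] at this
      simpa using this.neg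
    have hEsv : ∫ ω, stoppedValue M τ ω ∂μ ≤ ∫ ω, M 0 ω ∂μ := by
      have h0 : IsStoppingTime 𝒢 (fun _ : Ω => ((0 : ℕ) : WithTop ℕ)) := isStoppingTime_const 𝒢 0
      have := hM.neg.expected_stoppedValue_mono h0 hτ (fun ω => WithTop.coe_le_coe.2 (Nat.zero_le _)) hτle
      have h1 : ∫ ω, stoppedValue (-M) (fun _ : Ω => ((0 : ℕ) : WithTop ℕ)) ω ∂μ = -∫ ω, M 0 ω ∂μ := by
        rw [← integral_neg]; rfl
      have h2 : ∫ ω, stoppedValue (-M) τ ω ∂μ = -∫ ω, stoppedValue M τ ω ∂μ := by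
        rw [← integral_neg]; rfl
      rw [h1, h2] at this
      linarith
    have hge : ∀ ω ∈ A n, c ≤ stoppedValue M τ ω := by
      intro ω hω
      simp only [hA, Set.mem_iUnion, Set.mem_setOf_eq] at hω
      obtain ⟨j, hj, hcj⟩ := hω
      exact stoppedValue_hittingBtwn_mem ⟨j, ⟨Nat.zero_le _, hj⟩, hcj⟩
    have hset : c * (μ (A n)).toReal ≤ ∫ ω in A n, stoppedValue M τ ω ∂μ :=
      setIntegral_ge_of_const_le_real (hAmeas n) (measure_ne_top _ _) hge hsv_int.integrableOn
    have hsetle : ∫ ω in A n, stoppedValue M τ ω ∂μ ≤ ∫ ω, stoppedValue M τ ω ∂μ := by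
      apply setIntegral_le_integral hsv_int
      filter_upwards with ω using hnn _ ω
    have : (μ (A n)).toReal ≤ (∫ ω, M 0 ω ∂μ) / c := by
      rw [le_div_iff₀ hc]
      calc (μ (A n)).toReal * c = c * (μ (A n)).toReal := mul_comm _ _
        _ ≤ _ := hset.trans (hsetle.trans hEsv)
    calc μ (A n) = ENNReal.ofReal ((μ (A n)).toReal) := (ENNReal.ofReal_toReal (measure_ne_top _ _)).symm
      _ ≤ _ := ENNReal.ofReal_le_ofReal this
  have hcup : {ω | ∃ n, c ≤ M n ω} ⊆ ⋃ n, A n := by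
    intro ω ⟨n, hn⟩
    exact Set.mem_iUnion.2 ⟨n, Set.mem_iUnion₂.2 ⟨n, le_refl n, hn⟩⟩
  calc μ {ω | ∃ n, c ≤ M n ω} ≤ μ (⋃ n, A n) := measure_mono hcup
    _ = ⨆ n, μ (A n) := hAmono.directed_le.measure_iUnion
    _ ≤ _ := iSup_le key


lemma exp_sum_supermartingale {Ω : Type*} {m0 : MeasurableSpace Ω} (μ : Measure Ω)
    [IsProbabilityMeasure μ] (ℱ : Filtration ℕ m0) (g : ℕ → Ω → ℝ)
    (hmeas : ∀ t, 1 ≤ t → Measurable[ℱ t] (g t))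
    (hbd : ∀ t, 1 ≤ t → ∀ ω, g t ω ≤ 2)
    (hstep : ∀ t, 1 ≤ t → μ[(fun ω => Real.exp (g t ω)) | ℱ (t - 1)] ≤ᵐ[μ] fun _ => 1) :
    Supermartingale (fun T ω => Real.exp (∑ t ∈ Finset.Icc 1 T, g t ω)) ℱ μ := by
  set M : ℕ → Ω → ℝ := fun T ω => Real.exp (∑ t ∈ Finset.Icc 1 T, g t ω) with hM
  have hMmeas : ∀ T, Measurable[ℱ T] (M T) := by
    intro T
    apply Measurable.exp
    apply Finset.measurable_sum
    intro t ht
    rw [Finset.mem_Icc] at ht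
    exact (hmeas t ht.1).le (ℱ.mono ht.2)
  have hMbd : ∀ T ω, M T ω ≤ Real.exp (2 * T) := by
    intro T ω
    apply Real.exp_le_exp.2
    calc ∑ t ∈ Finset.Icc 1 T, g t ω ≤ ∑ t ∈ Finset.Icc 1 T, (2:ℝ) := by
          apply Finset.sum_le_sum
          intro t ht
          exact hbd t (Finset.mem_Icc.1 ht).1 ω
      _ ≤ 2 * T := by
          rw [Finset.sum_const, Nat.card_Icc, Nat.add_sub_cancel, nsmul_eq_mul]
          linarith
  have hMint : ∀ T, Integrable (M T) μ := by
    intro T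
    refine Integrable.mono' (integrable_const (Real.exp (2 * T)))
      (((hMmeas T).le (ℱ.le T)).aestronglyMeasurable) ?_
    filter_upwards with ω
    rw [Real.norm_eq_abs, abs_of_pos (Real.exp_pos _)]
    exact hMbd T ω
  apply supermartingale_nat
  · exact fun T => (hMmeas T).stronglyMeasurable
  · exact hMint
  · intro i
    have hsplit : M (i + 1) = fun ω => M i ω * Real.exp (g (i + 1) ω) := by
      funext ω
      rw [hM]
      simp only
      rw [← Real.exp_add]
      congr 1
      rw [Finset.sum_Icc_succ_top (Nat.le_add_left 1 i)]
    have hpull : μ[M (i + 1) | ℱ i] =ᵐ[μ] M i * μ[(fun ω => Real.exp (g (i+1) ω)) | ℱ i] := by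
      rw [hsplit]
      have hint1 : Integrable (M i * fun ω => Real.exp (g (i+1) ω)) μ := by
        refine Integrable.mono' (integrable_const (Real.exp (2 * i) * Real.exp 2))
          ((((hMmeas i).le (ℱ.le i)).mul
            ((((hmeas (i+1) (Nat.le_add_left 1 i)).le (ℱ.le (i+1))).exp))).aestronglyMeasurable) ?_
        filter_upwards with ω
        rw [Pi.mul_apply, Real.norm_eq_abs, abs_of_pos (mul_pos (Real.exp_pos _) (Real.exp_pos _))]
        exact mul_le_mul (hMbd i ω) (Real.exp_le_exp.2 (hbd (i+1) (Nat.le_add_left 1 i) ω))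
          (Real.exp_pos _).le (Real.exp_pos _).le
      have hint2 : Integrable (fun ω => Real.exp (g (i+1) ω)) μ := by
        refine Integrable.mono' (integrable_const (Real.exp 2))
          ((((hmeas (i+1) (Nat.le_add_left 1 i)).le (ℱ.le (i+1))).exp).aestronglyMeasurable) ?_
        filter_upwards with ω
        rw [Real.norm_eq_abs, abs_of_pos (Real.exp_pos _)]
        exact Real.exp_le_exp.2 (hbd (i+1) (Nat.le_add_left 1 i) ω)
      exact condExp_mul_of_stronglyMeasurable_left (hMmeas i).stronglyMeasurable hint1 hint2
    refine hpull.trans_le ?_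
    have hstep' := hstep (i+1) (Nat.le_add_left 1 i)
    simp only [Nat.add_sub_cancel] at hstep'
    filter_upwards [hstep'] with ω hω
    calc M i ω * (μ[(fun ω => Real.exp (g (i+1) ω)) | ℱ i]) ω ≤ M i ω * 1 :=
        mul_le_mul_of_nonneg_left hω (Real.exp_pos _).le
      _ = M i ω := mul_one _

lemma eb_core {Ω : Type*} {m0 : MeasurableSpace Ω} (μ : Measure Ω) [IsProbabilityMeasure μ]
    (ℱ : Filtration ℕ m0) (θ : ℝ) (hθ : |θ| ≤ 1)
    (α : ℝ) (hα : α ∈ Set.Ioo (0 : ℝ) 1)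
    (k : ℕ → ℝ) (hk : ∀ t, 2 ≤ k t)
    (h lam : ℕ → Ω → ℝ)
    (hint : ∀ t, Integrable (h t) μ)
    (hadapted : ∀ t, Measurable[ℱ t] (h t))
    (hbd : ∀ t, 1 ≤ t → ∀ᵐ ω ∂μ, |h t ω| ≤ k t)
    (hcond : ∀ t, 1 ≤ t → μ[h t | ℱ (t - 1)] =ᵐ[μ] fun _ => θ)
    (hlampred : ∀ t, 1 ≤ t → Measurable[ℱ (t - 1)] (lam t))
    (ξ : ℕ → Ω → ℝ) (hξ : ∀ t ω, ξ t ω = h t ω / (k t + 1))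
    (qhat : ℕ → Ω → ℝ) (hqhat1 : ∀ ω, qhat 1 ω = 0)
    (hqhat : ∀ t, 2 ≤ t → ∀ ω, qhat t ω =
      min ((∑ i ∈ Finset.Icc 1 (t - 1), ξ i ω) / ((t : ℝ) - 1)) (1 / (k t + 1)))
    (ψE : ℝ → ℝ) (hψE : ∀ l, ψE l = -Real.log (1 - l) - l) :
    μ {ω | (∀ t, 1 ≤ t → |h t ω| ≤ k t ∧ lam t ω ∈ Set.Ioo (0 : ℝ) 1) ∧
        ∃ T, Real.log (2 / α) < ∑ t ∈ Finset.Icc 1 T,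
          (lam t ω * (ξ t ω - θ / (k t + 1)) - (ξ t ω - qhat t ω) ^ 2 * ψE (lam t ω))} ≤
      ENNReal.ofReal (α / 2) := by
  -- basic facts about k
  have hkpos : ∀ t, (0:ℝ) < k t + 1 := fun t => by linarith [hk t]
  have hkr : ∀ t, k t / (k t + 1) ≤ 1 := fun t => by
    rw [div_le_one (hkpos t)]; linarith
  have hkrnn : ∀ t, 0 ≤ k t / (k t + 1) := fun t => div_nonneg (by linarith [hk t]) (hkpos t).le
  -- truncated versions
  set lam' : ℕ → Ω → ℝ := fun t ω => if lam t ω ∈ Set.Ioo (0:ℝ) 1 then lam t ω else 1/2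
    with hlam'def
  set ξ' : ℕ → Ω → ℝ := fun t ω => max (-(k t / (k t + 1))) (min (k t / (k t + 1)) (ξ t ω))
    with hξ'def
  set q' : ℕ → Ω → ℝ := fun t ω => if t ≤ 1 then 0 else
      min ((∑ i ∈ Finset.Icc 1 (t - 1), ξ' i ω) / ((t : ℝ) - 1)) (1 / (k t + 1)) with hq'def
  have hlam'mem : ∀ t ω, lam' t ω ∈ Set.Ioo (0:ℝ) 1 := by
    intro t ω
    have heq : lam' t ω = if lam t ω ∈ Set.Ioo (0:ℝ) 1 then lam t ω else 1/2 := rfl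
    rw [heq]
    split_ifs with hcc
    · exact hcc
    · constructor <;> norm_num
  have hξ'bd : ∀ t ω, |ξ' t ω| ≤ k t / (k t + 1) := by
    intro t ω
    rw [abs_le]
    constructor
    · exact le_max_left _ _
    · apply max_le
      · linarith [hkrnn t]
      · exact min_le_left _ _
  have hξ'bd1 : ∀ t ω, |ξ' t ω| ≤ 1 := fun t ω => (hξ'bd t ω).trans (hkr t)
  have hq'le : ∀ t ω, q' t ω ≤ 1 / (k t + 1) := by
    intro t ω
    have heq : q' t ω = if t ≤ 1 then 0 else
        min ((∑ i ∈ Finset.Icc 1 (t - 1), ξ' i ω) / ((t : ℝ) - 1)) (1 / (k t + 1)) := rfl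
    rw [heq]
    split_ifs with ht
    · exact le_of_lt (one_div_pos.2 (hkpos t))
    · exact min_le_right _ _
  have hq'ge : ∀ t ω, -1 ≤ q' t ω := by
    intro t ω
    have heq : q' t ω = if t ≤ 1 then 0 else
        min ((∑ i ∈ Finset.Icc 1 (t - 1), ξ' i ω) / ((t : ℝ) - 1)) (1 / (k t + 1)) := rfl
    rw [heq]
    split_ifs with ht
    · norm_num
    · push_neg at ht
      have ht2 : 2 ≤ t := ht
      have htR : (0:ℝ) < (t:ℝ) - 1 := by
        have : (2:ℝ) ≤ (t:ℝ) := by exact_mod_cast ht2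
        linarith
      apply le_min
      · rw [le_div_iff₀ htR]
        have hsum : -((t:ℝ) - 1) ≤ ∑ i ∈ Finset.Icc 1 (t-1), ξ' i ω := by
          have hcard : ((Finset.Icc 1 (t-1)).card : ℝ) = (t:ℝ) - 1 := by
            rw [Nat.card_Icc]
            have h1t : 1 ≤ t := by omega
            have : t - 1 + 1 - 1 = t - 1 := by omega
            rw [this]
            push_cast [Nat.cast_sub h1t]
            ring
          calc -((t:ℝ) - 1) = ∑ i ∈ Finset.Icc 1 (t-1), (-1 : ℝ) := by
                rw [Finset.sum_const, nsmul_eq_mul, hcard]; ring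
            _ ≤ _ := Finset.sum_le_sum (fun i _ => (abs_le.1 (hξ'bd1 i ω)).1)
        linarith
      · have : (0:ℝ) < 1 / (k t + 1) := one_div_pos.2 (hkpos t)
        linarith
  have hξ'q' : ∀ t ω, -1 ≤ ξ' t ω - q' t ω := by
    intro t ω
    have h1 : -(k t / (k t + 1)) ≤ ξ' t ω := le_max_left _ _
    have h2 : q' t ω ≤ 1 / (k t + 1) := hq'le t ω
    have : k t / (k t + 1) + 1 / (k t + 1) = 1 := by
      rw [← add_div, div_self (hkpos t).ne']
    linarith
  have hψnn : ∀ l ∈ Set.Ioo (0:ℝ) 1, 0 ≤ ψE l := by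
    intro l hl
    rw [hψE]
    have : Real.log (1 - l) ≤ (1 - l) - 1 := Real.log_le_sub_one_of_pos (by linarith [hl.2])
    linarith
  -- the increments
  set c : ℕ → ℝ := fun t => θ / (k t + 1) with hcdef
  have hcbd : ∀ t, |c t| ≤ 1 := by
    intro t
    rw [hcdef]
    simp only
    rw [abs_div, abs_of_pos (hkpos t)]
    rw [div_le_one (hkpos t)]
    linarith [hk t, hθ]
  set g : ℕ → Ω → ℝ := fun t ω =>
      lam' t ω * (ξ' t ω - c t) - (ξ' t ω - q' t ω) ^ 2 * ψE (lam' t ω) with hgdef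
  have hgbd : ∀ t, 1 ≤ t → ∀ ω, g t ω ≤ 2 := by
    intro t _ ω
    have h1 := hlam'mem t ω
    have h2 := hξ'bd1 t ω
    have h3 := hcbd t
    have h4 := hψnn _ (hlam'mem t ω)
    have h5 : lam' t ω * (ξ' t ω - c t) ≤ 2 := by
      have habs : |ξ' t ω - c t| ≤ 2 := by
        rw [abs_le] at h2 h3 ⊢
        constructor <;> [linarith [h2.1, h3.2]; linarith [h2.2, h3.1]]
      nlinarith [mul_le_mul_of_nonneg_left (abs_le.1 habs).2 h1.1.le, h1.2.le]
    have hgeq : g t ω = lam' t ω * (ξ' t ω - c t)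
        - (ξ' t ω - q' t ω) ^ 2 * ψE (lam' t ω) := rfl
    rw [hgeq]
    have h6 : 0 ≤ (ξ' t ω - q' t ω) ^ 2 * ψE (lam' t ω) := mul_nonneg (sq_nonneg _) h4
    linarith
  -- integrability helper
  have hbint : ∀ (f : Ω → ℝ) (C : ℝ), Measurable f → (∀ ω, |f ω| ≤ C) → Integrable f μ := by
    intro f C hf hC
    refine Integrable.mono' (integrable_const C) hf.aestronglyMeasurable ?_
    filter_upwards with ω
    rw [Real.norm_eq_abs]
    exact hC ω
  -- measurability
  have hξmeas : ∀ t, Measurable[ℱ t] (ξ t) := by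
    intro t
    have heq : ξ t = fun ω => h t ω / (k t + 1) := funext (hξ t)
    rw [heq]
    exact (hadapted t).div_const _
  have hξ'meas : ∀ t, Measurable[ℱ t] (ξ' t) :=
    fun t => measurable_const.max (measurable_const.min (hξmeas t))
  have hlam'meas : ∀ t, 1 ≤ t → Measurable[ℱ (t - 1)] (lam' t) := by
    intro t ht
    exact Measurable.ite ((hlampred t ht) measurableSet_Ioo) (hlampred t ht) measurable_const
  have hq'meas : ∀ t, 1 ≤ t → Measurable[ℱ (t - 1)] (q' t) := by
    intro t ht
    rcases Nat.lt_or_ge t 2 with h2 | h2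
    · have heq : q' t = fun _ => 0 := funext fun ω => if_pos (by omega)
      rw [heq]
      exact measurable_const
    · have heq : q' t = fun ω =>
          min ((∑ i ∈ Finset.Icc 1 (t - 1), ξ' i ω) / ((t : ℝ) - 1)) (1 / (k t + 1)) :=
        funext fun ω => if_neg (by omega)
      rw [heq]
      refine Measurable.min ?_ measurable_const
      refine Measurable.div_const ?_ _
      refine Finset.measurable_sum _ fun i hi => ?_
      rw [Finset.mem_Icc] at hi
      exact (hξ'meas i).le (ℱ.mono hi.2)
  have hψmeas : ∀ t, 1 ≤ t → Measurable[ℱ (t - 1)] (fun ω => ψE (lam' t ω)) := by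
    intro t ht
    have heq : (fun ω => ψE (lam' t ω))
        = fun ω => -Real.log (1 - lam' t ω) - lam' t ω := funext fun ω => hψE _
    rw [heq]
    exact ((measurable_const.sub (hlam'meas t ht)).log.neg).sub (hlam'meas t ht)
  have hgmeas : ∀ t, 1 ≤ t → Measurable[ℱ t] (g t) := by
    intro t ht
    have hmono : (ℱ (t - 1) : MeasurableSpace Ω) ≤ ℱ t := ℱ.mono (Nat.sub_le t 1)
    have hl : Measurable[ℱ t] (lam' t) := (hlam'meas t ht).le hmono
    have hq : Measurable[ℱ t] (q' t) := (hq'meas t ht).le hmono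
    have hψl : Measurable[ℱ t] (fun ω => ψE (lam' t ω)) := (hψmeas t ht).le hmono
    exact (hl.mul ((hξ'meas t).sub measurable_const)).sub
      ((((hξ'meas t).sub hq).pow measurable_const).mul hψl)
  -- one-step conditional expectation bound
  have hstep : ∀ t, 1 ≤ t → μ[(fun ω => Real.exp (g t ω)) | ℱ (t - 1)] ≤ᵐ[μ] fun _ => 1 := by
    intro t ht
    set A : Ω → ℝ := fun ω => Real.exp (lam' t ω * (q' t ω - c t)) * (1 - lam' t ω * q' t ω)
      with hAdef
    set B : Ω → ℝ := fun ω => Real.exp (lam' t ω * (q' t ω - c t)) * lam' t ω with hBdef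
    have hexp2 : ∀ ω, Real.exp (lam' t ω * (q' t ω - c t)) ≤ Real.exp 2 := by
      intro ω
      apply Real.exp_le_exp.2
      have h1 := hlam'mem t ω
      have h2 := hq'le t ω
      have h3 := hq'ge t ω
      have h4 := abs_le.1 (hcbd t)
      have h5 : q' t ω ≤ 1 := (hq'le t ω).trans (by
        rw [div_le_one (hkpos t)]; linarith [hk t])
      nlinarith [h1.1, h1.2]
    have hpt : ∀ ω, Real.exp (g t ω) ≤ A ω + B ω * ξ' t ω := by
      intro ω
      have hl := hlam'mem t ω
      have hx : (-1 : ℝ) ≤ ξ' t ω - q' t ω := hξ'q' t ω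
      have hfan := fan_ineq hx hl.1.le hl.2
      have hψ : (ξ' t ω - q' t ω) ^ 2 * ψE (lam' t ω)
          = -((ξ' t ω - q' t ω) ^ 2 * (Real.log (1 - lam' t ω) + lam' t ω)) := by
        rw [hψE]; ring
      have hgval : g t ω = lam' t ω * (q' t ω - c t) + (lam' t ω * (ξ' t ω - q' t ω)
          + (ξ' t ω - q' t ω) ^ 2 * (Real.log (1 - lam' t ω) + lam' t ω)) := by
        have hg0 : g t ω = lam' t ω * (ξ' t ω - c t)
            - (ξ' t ω - q' t ω) ^ 2 * ψE (lam' t ω) := rfl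
        rw [hg0, hψ]; ring
      have h1x : 0 < 1 + lam' t ω * (ξ' t ω - q' t ω) := by
        nlinarith [hl.1, hl.2]
      calc Real.exp (g t ω)
          ≤ Real.exp (lam' t ω * (q' t ω - c t)
              + Real.log (1 + lam' t ω * (ξ' t ω - q' t ω))) := by
            apply Real.exp_le_exp.2
            rw [hgval]
            linarith
        _ = Real.exp (lam' t ω * (q' t ω - c t))
              * (1 + lam' t ω * (ξ' t ω - q' t ω)) := by
            rw [Real.exp_add, Real.exp_log h1x]
        _ = A ω + B ω * ξ' t ω := by rw [hAdef, hBdef]; ring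
    -- measurability of A, B at level t-1
    have hAmeas : Measurable[ℱ (t - 1)] A := by
      rw [hAdef]
      exact (((hlam'meas t ht).mul ((hq'meas t ht).sub measurable_const)).exp).mul
        (measurable_const.sub ((hlam'meas t ht).mul (hq'meas t ht)))
    have hBmeas : Measurable[ℱ (t - 1)] B := by
      rw [hBdef]
      exact (((hlam'meas t ht).mul ((hq'meas t ht).sub measurable_const)).exp).mul
        (hlam'meas t ht)
    have hAbd : ∀ ω, |A ω| ≤ Real.exp 2 * 2 := by
      intro ω
      rw [hAdef]
      simp only
      rw [abs_mul, abs_of_pos (Real.exp_pos _)]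
      have h1 := hlam'mem t ω
      have h3 := hq'ge t ω
      have h5 : q' t ω ≤ 1 := (hq'le t ω).trans (by
        rw [div_le_one (hkpos t)]; linarith [hk t])
      have h6 : |1 - lam' t ω * q' t ω| ≤ 2 := by
        rw [abs_le]
        constructor <;> nlinarith [h1.1, h1.2]
      exact mul_le_mul (hexp2 ω) h6 (abs_nonneg _) (Real.exp_pos _).le
    have hBbd : ∀ ω, |B ω| ≤ Real.exp 2 := by
      intro ω
      rw [hBdef]
      simp only
      rw [abs_mul, abs_of_pos (Real.exp_pos _)]
      have h1 := hlam'mem t ω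
      calc Real.exp (lam' t ω * (q' t ω - c t)) * |lam' t ω|
          ≤ Real.exp 2 * 1 := by
            apply mul_le_mul (hexp2 ω) _ (abs_nonneg _) (Real.exp_pos _).le
            rw [abs_le]; constructor <;> linarith [h1.1, h1.2]
        _ = Real.exp 2 := mul_one _
    have hAmeas0 : Measurable A := hAmeas.le (ℱ.le _)
    have hBmeas0 : Measurable B := hBmeas.le (ℱ.le _)
    have hξ'meas0 : Measurable (ξ' t) := (hξ'meas t).le (ℱ.le _)
    have hAint : Integrable A μ := hbint A _ hAmeas0 hAbd
    have hBξint : Integrable (fun ω => B ω * ξ' t ω) μ := by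
      refine hbint _ (Real.exp 2 * 1) (hBmeas0.mul hξ'meas0) fun ω => ?_
      rw [abs_mul]
      exact mul_le_mul (hBbd ω) (hξ'bd1 t ω) (abs_nonneg _) (Real.exp_pos _).le
    have hξ'int : Integrable (ξ' t) μ := hbint _ 1 hξ'meas0 (hξ'bd1 t)
    have hexpgint : Integrable (fun ω => Real.exp (g t ω)) μ := by
      refine hbint _ (Real.exp 2) ((hgmeas t ht).le (ℱ.le t)).exp fun ω => ?_
      rw [abs_of_pos (Real.exp_pos _)]
      exact Real.exp_le_exp.2 (hgbd t ht ω)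
    have hRint : Integrable (fun ω => A ω + B ω * ξ' t ω) μ := hAint.add hBξint
    -- conditional expectation of ξ'
    have hcondξ : μ[ξ' t | ℱ (t - 1)] =ᵐ[μ] fun _ => c t := by
      have h1 : ξ' t =ᵐ[μ] (k t + 1)⁻¹ • h t := by
        filter_upwards [hbd t ht] with ω hω
        have hb : |ξ t ω| ≤ k t / (k t + 1) := by
          rw [hξ, abs_div, abs_of_pos (hkpos t)]
          exact div_le_div_of_nonneg_right hω (hkpos t).le
        have hb' := abs_le.1 hb
        have e1 : ξ' t ω = ξ t ω := by
          have : min (k t / (k t + 1)) (ξ t ω) = ξ t ω := min_eq_right hb'.2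
          have e : ξ' t ω = max (-(k t / (k t + 1))) (min (k t / (k t + 1)) (ξ t ω)) := rfl
          rw [e, this]
          exact max_eq_right hb'.1
        rw [e1, hξ]
        simp [smul_eq_mul, div_eq_inv_mul]
      calc μ[ξ' t | ℱ (t - 1)] =ᵐ[μ] μ[(k t + 1)⁻¹ • h t | ℱ (t - 1)] := condExp_congr_ae h1
        _ =ᵐ[μ] (k t + 1)⁻¹ • μ[h t | ℱ (t - 1)] := condExp_smul _ _ _
        _ =ᵐ[μ] fun _ => c t := by
            filter_upwards [hcond t ht] with ω hω
            simp only [Pi.smul_apply, smul_eq_mul]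
            rw [hω]
            rw [hcdef]
            simp [div_eq_inv_mul]
    -- compute conditional expectation of R
    have hcondR : μ[(fun ω => A ω + B ω * ξ' t ω) | ℱ (t - 1)]
        =ᵐ[μ] fun ω => A ω + B ω * c t := by
      calc μ[(fun ω => A ω + B ω * ξ' t ω) | ℱ (t - 1)]
          =ᵐ[μ] μ[A | ℱ (t - 1)] + μ[(fun ω => B ω * ξ' t ω) | ℱ (t - 1)] := by
            have := condExp_add (μ := μ) (m := ℱ (t - 1)) hAint hBξint
            exact this
        _ =ᵐ[μ] fun ω => A ω + B ω * c t := by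
            have hA' : μ[A | ℱ (t - 1)] = A :=
              condExp_of_stronglyMeasurable (ℱ.le _) hAmeas.stronglyMeasurable hAint
            have hB' : μ[(fun ω => B ω * ξ' t ω) | ℱ (t - 1)]
                =ᵐ[μ] B * μ[ξ' t | ℱ (t - 1)] := by
              have := condExp_mul_of_stronglyMeasurable_left hBmeas.stronglyMeasurable
                hBξint hξ'int
              exact this
            filter_upwards [hB', hcondξ] with ω h2 h3
            simp only [Pi.add_apply, hA']
            rw [Pi.mul_apply] at h2
            rw [h2, h3]
    have hR1 : ∀ ω, A ω + B ω * c t ≤ 1 := by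
      intro ω
      have h1 : A ω + B ω * c t = Real.exp (lam' t ω * (q' t ω - c t))
          * (1 + lam' t ω * (c t - q' t ω)) := by rw [hAdef, hBdef]; ring
      have h2 : 1 + lam' t ω * (c t - q' t ω)
          ≤ Real.exp (lam' t ω * (c t - q' t ω)) := by
          linarith [Real.add_one_le_exp (lam' t ω * (c t - q' t ω))]
      calc A ω + B ω * c t
          ≤ Real.exp (lam' t ω * (q' t ω - c t))
            * Real.exp (lam' t ω * (c t - q' t ω)) := by
            rw [h1]
            exact mul_le_mul_of_nonneg_left h2 (Real.exp_pos _).le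
        _ = Real.exp (lam' t ω * (q' t ω - c t) + lam' t ω * (c t - q' t ω)) :=
            (Real.exp_add _ _).symm
        _ = 1 := by rw [show lam' t ω * (q' t ω - c t) + lam' t ω * (c t - q' t ω) = 0 by ring,
            Real.exp_zero]
    calc μ[(fun ω => Real.exp (g t ω)) | ℱ (t - 1)]
        ≤ᵐ[μ] μ[(fun ω => A ω + B ω * ξ' t ω) | ℱ (t - 1)] :=
          condExp_mono hexpgint hRint (Filter.Eventually.of_forall hpt)
      _ ≤ᵐ[μ] fun _ => 1 := by
          filter_upwards [hcondR] with ω hω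
          rw [hω]
          exact hR1 ω
  -- the supermartingale and Ville's inequality
  have hsuper := exp_sum_supermartingale μ ℱ g hgmeas hgbd hstep
  have hα2 : (0:ℝ) < 2 / α := div_pos two_pos hα.1
  have hville := ville hsuper (fun n ω => (Real.exp_pos _).le) hα2
  have hM0 : ∫ ω, Real.exp (∑ t ∈ Finset.Icc 1 0, g t ω) ∂μ = 1 := by
    have : ∀ ω : Ω, Real.exp (∑ t ∈ Finset.Icc 1 0, g t ω) = 1 := by
      intro ω
      rw [show Finset.Icc 1 0 = (∅ : Finset ℕ) by rfl]
      simp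
    simp only [this]
    simp
  rw [hM0] at hville
  have hdiv : (1:ℝ) / (2 / α) = α / 2 := by
    field_simp
  rw [hdiv] at hville
  refine le_trans (measure_mono ?_) hville
  rintro ω ⟨hall, T, hT⟩
  refine ⟨T, ?_⟩
  have e2all : ∀ i, 1 ≤ i → ξ' i ω = ξ i ω := by
    intro i hi
    have hb : |ξ i ω| ≤ k i / (k i + 1) := by
      rw [hξ, abs_div, abs_of_pos (hkpos i)]
      exact div_le_div_of_nonneg_right (hall i hi).1 (hkpos i).le
    have hb' := abs_le.1 hb
    have e : ξ' i ω = max (-(k i / (k i + 1))) (min (k i / (k i + 1)) (ξ i ω)) := rfl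
    rw [e, min_eq_right hb'.2]
    exact max_eq_right hb'.1
  have hsums : ∑ t ∈ Finset.Icc 1 T,
      (lam t ω * (ξ t ω - θ / (k t + 1)) - (ξ t ω - qhat t ω) ^ 2 * ψE (lam t ω))
      = ∑ t ∈ Finset.Icc 1 T, g t ω := by
    refine Finset.sum_congr rfl fun t ht' => ?_
    have ht1 : 1 ≤ t := (Finset.mem_Icc.1 ht').1
    have e1 : lam' t ω = lam t ω := if_pos (hall t ht1).2
    have e2 : ξ' t ω = ξ t ω := e2all t ht1
    have e3 : q' t ω = qhat t ω := by
      rcases Nat.lt_or_ge t 2 with h2 | h2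
      · have ht1' : t = 1 := by omega
        have : q' t ω = 0 := if_pos (by omega)
        rw [this, ht1', hqhat1]
      · have hq'eq : q' t ω = min ((∑ i ∈ Finset.Icc 1 (t - 1), ξ' i ω) / ((t : ℝ) - 1))
            (1 / (k t + 1)) := if_neg (by omega)
        rw [hq'eq, hqhat t h2]
        congr 2
        refine Finset.sum_congr rfl fun i hi => ?_
        exact e2all i (Finset.mem_Icc.1 hi).1
    have hgeq : g t ω = lam' t ω * (ξ' t ω - c t)
        - (ξ' t ω - q' t ω) ^ 2 * ψE (lam' t ω) := rfl
    rw [hgeq, e1, e2, e3, hcdef]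
  rw [hsums] at hT
  calc 2 / α = Real.exp (Real.log (2 / α)) := (Real.exp_log hα2).symm
    _ ≤ Real.exp (∑ t ∈ Finset.Icc 1 T, g t ω) := Real.exp_le_exp.2 hT.le

/-- Theorem 3: the predictable plug-in empirical Bernstein confidence sequence
has time-uniform coverage 1 - α. -/
theorem prpi_empirical_bernstein_cs
    {Ω : Type*} {m0 : MeasurableSpace Ω} (μ : Measure Ω) [IsProbabilityMeasure μ]
    (ℱ : Filtration ℕ m0) (θ0 : ℝ) (hθ0 : θ0 ∈ Set.Icc (-1 : ℝ) 1)
    (α : ℝ) (hα : α ∈ Set.Ioo (0 : ℝ) 1)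
    (k : ℕ → ℝ) (hk : ∀ t, 2 ≤ k t)
    (h lam : ℕ → Ω → ℝ)
    (hint : ∀ t, Integrable (h t) μ)
    (hadapted : ∀ t, Measurable[ℱ t] (h t))
    (hbd : ∀ t, 1 ≤ t → ∀ᵐ ω ∂μ, |h t ω| ≤ k t)
    (hcond : ∀ t, 1 ≤ t → μ[h t | ℱ (t - 1)] =ᵐ[μ] fun _ => θ0)
    (hlampred : ∀ t, 1 ≤ t → Measurable[ℱ (t - 1)] (lam t))
    (hlam : ∀ t, 1 ≤ t → ∀ᵐ ω ∂μ, lam t ω ∈ Set.Ioo (0 : ℝ) 1)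
    -- scaled A2IPW terms
    (ξ ξm : ℕ → Ω → ℝ)
    (hξ : ∀ t ω, ξ t ω = h t ω / (k t + 1))
    (hξm : ∀ t ω, ξm t ω = -h t ω / (k t + 1))
    -- predictable truncated running means
    (qhat qhatm : ℕ → Ω → ℝ)
    (hqhat1 : ∀ ω, qhat 1 ω = 0) (hqhatm1 : ∀ ω, qhatm 1 ω = 0)
    (hqhat : ∀ t, 2 ≤ t → ∀ ω, qhat t ω =
      min ((∑ i ∈ Finset.Icc 1 (t - 1), ξ i ω) / ((t : ℝ) - 1)) (1 / (k t + 1)))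
    (hqhatm : ∀ t, 2 ≤ t → ∀ ω, qhatm t ω =
      min ((∑ i ∈ Finset.Icc 1 (t - 1), ξm i ω) / ((t : ℝ) - 1)) (1 / (k t + 1)))
    -- the ψ_E function, the normalizer, and the lower/upper boundaries
    (ψE : ℝ → ℝ) (hψE : ∀ l, ψE l = -Real.log (1 - l) - l)
    (D L U : ℕ → Ω → ℝ)
    (hD : ∀ T ω, D T ω = ∑ t ∈ Finset.Icc 1 T, lam t ω / (k t + 1))
    (hL : ∀ T ω, L T ω = ((∑ t ∈ Finset.Icc 1 T, lam t ω * ξ t ω)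
      - Real.log (2 / α)
      - ∑ t ∈ Finset.Icc 1 T, (ξ t ω - qhat t ω) ^ 2 * ψE (lam t ω)) / D T ω)
    (hU : ∀ T ω, U T ω = ((∑ t ∈ Finset.Icc 1 T, lam t ω * ξ t ω)
      + Real.log (2 / α)
      + ∑ t ∈ Finset.Icc 1 T, (ξm t ω - qhatm t ω) ^ 2 * ψE (lam t ω)) / D T ω) :
    ENNReal.ofReal (1 - α) ≤ μ {ω | ∀ T, 1 ≤ T → L T ω ≤ θ0 ∧ θ0 ≤ U T ω} := by
  have hkpos : ∀ t, (0:ℝ) < k t + 1 := fun t => by linarith [hk t]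
  have hθabs : |θ0| ≤ 1 := abs_le.2 ⟨hθ0.1, hθ0.2⟩
  have hcoreL := eb_core μ ℱ θ0 hθabs α hα k hk h lam hint hadapted hbd hcond hlampred
    ξ hξ qhat hqhat1 hqhat ψE hψE
  have hcoreU := eb_core μ ℱ (-θ0) (by rwa [abs_neg]) α hα k hk (fun t ω => -h t ω) lam
    (fun t => (hint t).neg)
    (fun t => (hadapted t).neg)
    (fun t ht => by filter_upwards [hbd t ht] with ω hω; rwa [abs_neg])
    (fun t ht => by
      have h1 : μ[(fun ω => -h t ω) | ℱ (t - 1)] =ᵐ[μ] -μ[h t | ℱ (t - 1)] := condExp_neg _ _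
      refine h1.trans ?_
      filter_upwards [hcond t ht] with ω hω
      simp only [Pi.neg_apply]
      rw [hω])
    hlampred ξm hξm qhatm hqhatm1 hqhatm ψE hψE
  -- the almost-sure good event
  have hae : ∀ᵐ ω ∂μ, ∀ t, 1 ≤ t → |h t ω| ≤ k t ∧ lam t ω ∈ Set.Ioo (0 : ℝ) 1 := by
    rw [MeasureTheory.ae_all_iff]
    intro t
    by_cases ht : 1 ≤ t
    · filter_upwards [hbd t ht, hlam t ht] with ω h1 h2
      exact fun _ => ⟨h1, h2⟩
    · filter_upwards with ω
      exact fun h' => absurd h' ht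
  have hN : μ {ω | ¬ ∀ t, 1 ≤ t → |h t ω| ≤ k t ∧ lam t ω ∈ Set.Ioo (0 : ℝ) 1} = 0 := hae
  set NS : Set Ω := {ω | ¬ ∀ t, 1 ≤ t → |h t ω| ≤ k t ∧ lam t ω ∈ Set.Ioo (0 : ℝ) 1} with hNS
  set BL : Set Ω := {ω | (∀ t, 1 ≤ t → |h t ω| ≤ k t ∧ lam t ω ∈ Set.Ioo (0 : ℝ) 1) ∧
        ∃ T, Real.log (2 / α) < ∑ t ∈ Finset.Icc 1 T,
          (lam t ω * (ξ t ω - θ0 / (k t + 1)) - (ξ t ω - qhat t ω) ^ 2 * ψE (lam t ω))} with hBL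
  set BU : Set Ω := {ω | (∀ t, 1 ≤ t → |(fun t ω => -h t ω) t ω| ≤ k t ∧
          lam t ω ∈ Set.Ioo (0 : ℝ) 1) ∧
        ∃ T, Real.log (2 / α) < ∑ t ∈ Finset.Icc 1 T,
          (lam t ω * (ξm t ω - (-θ0) / (k t + 1)) - (ξm t ω - qhatm t ω) ^ 2 * ψE (lam t ω))}
    with hBU
  -- the complement of the target is contained in the union of the bad events
  have hsubset : {ω | ∀ T, 1 ≤ T → L T ω ≤ θ0 ∧ θ0 ≤ U T ω}ᶜ ⊆ NS ∪ (BL ∪ BU) := by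
    intro ω hω
    by_cases hP : ∀ t, 1 ≤ t → |h t ω| ≤ k t ∧ lam t ω ∈ Set.Ioo (0 : ℝ) 1
    swap
    · exact Or.inl hP
    right
    simp only [Set.mem_compl_iff, Set.mem_setOf_eq, not_forall] at hω
    obtain ⟨T, hT1, hTbad⟩ := hω
    have hDpos : 0 < D T ω := by
      rw [hD]
      apply Finset.sum_pos _ (Finset.nonempty_Icc.2 hT1)
      intro t ht'
      exact div_pos (hP t (Finset.mem_Icc.1 ht').1).2.1 (hkpos t)
    by_cases hLle : L T ω ≤ θ0
    · -- then the U side must fail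
      have hUlt : U T ω < θ0 := by
        by_contra hc
        push_neg at hc
        exact hTbad ⟨hLle, hc⟩
      right
      refine ⟨fun t ht => ⟨by rw [abs_neg]; exact (hP t ht).1, (hP t ht).2⟩, T, ?_⟩
      rw [hU] at hUlt
      have hnum := (div_lt_iff₀ hDpos).1 hUlt
      have hexp : ∑ t ∈ Finset.Icc 1 T,
          (lam t ω * (ξm t ω - (-θ0) / (k t + 1)) - (ξm t ω - qhatm t ω) ^ 2 * ψE (lam t ω))
          = θ0 * D T ω - (∑ t ∈ Finset.Icc 1 T, lam t ω * ξ t ω)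
            - ∑ t ∈ Finset.Icc 1 T, (ξm t ω - qhatm t ω) ^ 2 * ψE (lam t ω) := by
        rw [hD, Finset.mul_sum, ← Finset.sum_sub_distrib, ← Finset.sum_sub_distrib]
        refine Finset.sum_congr rfl fun t _ => ?_
        have hm : ξm t ω = -ξ t ω := by rw [hξm, hξ]; ring
        rw [hm]
        have hne := (hkpos t).ne'
        field_simp
        ring
      rw [hexp]
      linarith
    · -- the L side fails
      push_neg at hLle
      left
      refine ⟨hP, T, ?_⟩
      rw [hL] at hLle
      have hnum := (lt_div_iff₀ hDpos).1 hLle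
      have hexp : ∑ t ∈ Finset.Icc 1 T,
          (lam t ω * (ξ t ω - θ0 / (k t + 1)) - (ξ t ω - qhat t ω) ^ 2 * ψE (lam t ω))
          = (∑ t ∈ Finset.Icc 1 T, lam t ω * ξ t ω) - θ0 * D T ω
            - ∑ t ∈ Finset.Icc 1 T, (ξ t ω - qhat t ω) ^ 2 * ψE (lam t ω) := by
        rw [hD, Finset.mul_sum, ← Finset.sum_sub_distrib, ← Finset.sum_sub_distrib]
        refine Finset.sum_congr rfl fun t _ => ?_
        have hne := (hkpos t).ne'
        field_simp
      rw [hexp]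
      linarith
  have hbad : μ {ω | ∀ T, 1 ≤ T → L T ω ≤ θ0 ∧ θ0 ≤ U T ω}ᶜ ≤ ENNReal.ofReal α := by
    calc μ {ω | ∀ T, 1 ≤ T → L T ω ≤ θ0 ∧ θ0 ≤ U T ω}ᶜ
        ≤ μ (NS ∪ (BL ∪ BU)) := measure_mono hsubset
      _ ≤ μ NS + μ (BL ∪ BU) := measure_union_le _ _
      _ ≤ 0 + (ENNReal.ofReal (α/2) + ENNReal.ofReal (α/2)) := by
          refine add_le_add hN.le (le_trans (measure_union_le _ _) ?_)
          exact add_le_add hcoreL hcoreU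
      _ = ENNReal.ofReal α := by
          rw [zero_add, ← ENNReal.ofReal_add (by linarith [hα.1.le]) (by linarith [hα.1.le])]
          norm_num
  have h1 : (1 : ENNReal) ≤ μ {ω | ∀ T, 1 ≤ T → L T ω ≤ θ0 ∧ θ0 ≤ U T ω}
      + μ {ω | ∀ T, 1 ≤ T → L T ω ≤ θ0 ∧ θ0 ≤ U T ω}ᶜ := by
    calc (1 : ENNReal) = μ Set.univ := measure_univ.symm
      _ = μ ({ω | ∀ T, 1 ≤ T → L T ω ≤ θ0 ∧ θ0 ≤ U T ω} ∪
          {ω | ∀ T, 1 ≤ T → L T ω ≤ θ0 ∧ θ0 ≤ U T ω}ᶜ) := by rw [Set.union_compl_self]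
      _ ≤ _ := measure_union_le _ _
  calc ENNReal.ofReal (1 - α) = 1 - ENNReal.ofReal α := by
        rw [ENNReal.ofReal_sub _ hα.1.le, ENNReal.ofReal_one]
    _ ≤ 1 - μ {ω | ∀ T, 1 ≤ T → L T ω ≤ θ0 ∧ θ0 ≤ U T ω}ᶜ := tsub_le_tsub_left hbad 1
    _ ≤ μ {ω | ∀ T, 1 ≤ T → L T ω ≤ θ0 ∧ θ0 ≤ U T ω} := tsub_le_iff_right.2 h1
end
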